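/- arXiv:2303.05842 — 2 statements merged into one kernel-verified Lean document; each statement's English description precedes it below -/
import Mathlib

section
/- For every z ≥ 0 the function y ↦ Φ(y,z) is nondecreasing, Lipschitz continuous and of class C¹ on [0,∞). Moreover 0 ≤ ∂_yΦ(y,z) ≤ ∂_yΦ(z,z) = ψ'(z) ≤ ψ'(0) for all y,z ≥ 0; if z > 0 then ∂_yΦ(0,z) = 0; and the function ∂_yΦ is continuous on [0,∞)² \ {(0,0)}. -/
/-!
On `y ≤ z` the energy is the quadratic `ψ'(z) y² / (2z) + const`, whose slope `ψ'(z) y / z` meets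
`ψ'(y)` at `y = z`, so the two pieces glue to a `C¹` function with derivative `∂_yΦ`. Concavity
makes `ψ'` antitone and monotonicity makes it nonnegative, which gives
`0 ≤ ∂_yΦ(y,z) ≤ ψ'(z) ≤ ψ'(0)`, hence monotonicity and the Lipschitz bound. Away from the origin
`∂_yΦ(y,z) = ψ'(max y z) · y / max y z`, which is visibly jointly continuous.
-/

set_option autoImplicit false

open Set Filter Topology

theorem ConcaveOn.antitoneOn_of_hasDerivWithinAt {S : Set ℝ} {f f' : ℝ → ℝ}
    (hfc : ConcaveOn ℝ S f) (hf : ∀ x ∈ S, HasDerivWithinAt f (f' x) S x) :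
    AntitoneOn f' S := by
  intro x hx y hy hxy
  rcases hxy.eq_or_lt with rfl | hlt
  · exact le_rfl
  exact (hfc.le_slope_of_hasDerivWithinAt hx hy hlt (hf y hy)).trans
    (hfc.slope_le_of_hasDerivWithinAt hx hy hlt (hf x hx))

theorem MonotoneOn.nonneg_of_hasDerivWithinAt_Ici {f : ℝ → ℝ} {f' a x : ℝ}
    (hf : MonotoneOn f (Ici a)) (hd : HasDerivWithinAt f f' (Ici a) x) (hx : a ≤ x) :
    0 ≤ f' := by
  have hacc : AccPt x (𝓟 (Ici a)) := by
    rw [accPt_principal_iff_nhdsWithin]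
    have hsub : Ioi x ⊆ Ici a \ {x} := fun y hy => ⟨hx.trans hy.le, hy.ne'⟩
    exact NeBot.mono inferInstance (nhdsWithin_mono x hsub)
  exact hd.nonneg_of_monotoneOn hacc hf

theorem Convex.monotoneOn_of_hasDerivWithinAt_nonneg {D : Set ℝ} (hD : Convex ℝ D)
    {f f' : ℝ → ℝ} (hf : ∀ x ∈ D, HasDerivWithinAt f (f' x) D x)
    (hf' : ∀ x ∈ D, 0 ≤ f' x) : MonotoneOn f D :=
  _root_.monotoneOn_of_hasDerivWithinAt_nonneg hD (fun x hx => (hf x hx).continuousWithinAt)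
    (fun x hx => (hf x (interior_subset hx)).mono interior_subset)
    (fun x hx => hf' x (interior_subset hx))

noncomputable def cohesiveEnergy (ψ ψd : ℝ → ℝ) (y z : ℝ) : ℝ :=
  if y < z then ψd z / (2 * z) * y ^ 2 + ψ z - z * ψd z / 2 else ψ y

noncomputable def cohesiveEnergyDeriv (ψd : ℝ → ℝ) (y z : ℝ) : ℝ :=
  if y < z then ψd z * y / z else ψd y

section

variable {ψ ψd : ℝ → ℝ} {y z : ℝ}

theorem cohesiveEnergy_of_ge (h : z ≤ y) : cohesiveEnergy ψ ψd y z = ψ y :=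
  if_neg h.not_gt

theorem cohesiveEnergy_of_le (h : y ≤ z) :
    cohesiveEnergy ψ ψd y z = ψd z / (2 * z) * y ^ 2 + ψ z - z * ψd z / 2 := by
  rcases h.lt_or_eq with h | rfl
  · exact if_pos h
  · rw [cohesiveEnergy_of_ge le_rfl]
    rcases eq_or_ne y 0 with rfl | hy
    · simp
    · field_simp
      ring

theorem cohesiveEnergyDeriv_of_le (hz : z ≠ 0) (h : y ≤ z) :
    cohesiveEnergyDeriv ψd y z = ψd z * y / z := by
  rcases h.lt_or_eq with h | rfl
  · exact if_pos h
  · rw [cohesiveEnergyDeriv, if_neg (lt_irrefl y), mul_div_assoc, div_self hz, mul_one]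

theorem cohesiveEnergyDeriv_of_ge (h : z ≤ y) : cohesiveEnergyDeriv ψd y z = ψd y :=
  if_neg h.not_gt

theorem cohesiveEnergyDeriv_self : cohesiveEnergyDeriv ψd z z = ψd z :=
  cohesiveEnergyDeriv_of_ge le_rfl

theorem cohesiveEnergyDeriv_zero_left (hz : 0 < z) : cohesiveEnergyDeriv ψd 0 z = 0 := by
  simp [cohesiveEnergyDeriv, hz]

theorem hasDerivWithinAt_cohesiveEnergy_Iic (hz : z ≠ 0) (y : ℝ) :
    HasDerivWithinAt (fun y => cohesiveEnergy ψ ψd y z) (cohesiveEnergyDeriv ψd y z)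
      (Iic z) y := by
  by_cases hy : y ≤ z
  swap
  · exact HasFDerivWithinAt.of_notMem_closure (by rwa [closure_Iic])
  have hq : HasDerivAt (fun v => ψd z / (2 * z) * v ^ 2 + ψ z - z * ψd z / 2)
      (ψd z * y / z) y := by
    refine ((((hasDerivAt_pow 2 y).const_mul (ψd z / (2 * z))).add_const (ψ z)).sub_const
      (z * ψd z / 2)).congr_deriv ?_
    field_simp
    norm_num
  rw [cohesiveEnergyDeriv_of_le hz hy]
  exact hq.hasDerivWithinAt.congr (fun v hv => cohesiveEnergy_of_le hv) (cohesiveEnergy_of_le hy)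

theorem hasDerivWithinAt_cohesiveEnergy_Ici
    (hψ : ∀ x ∈ Ici (0:ℝ), HasDerivWithinAt ψ (ψd x) (Ici 0) x) (hz : 0 ≤ z) (y : ℝ) :
    HasDerivWithinAt (fun y => cohesiveEnergy ψ ψd y z) (cohesiveEnergyDeriv ψd y z)
      (Ici z) y := by
  by_cases hy : z ≤ y
  swap
  · exact HasFDerivWithinAt.of_notMem_closure (by rwa [closure_Ici])
  rw [cohesiveEnergyDeriv_of_ge hy]
  exact ((hψ y (hz.trans hy)).mono (Ici_subset_Ici.2 hz)).congr
    (fun v hv => cohesiveEnergy_of_ge hv) (cohesiveEnergy_of_ge hy)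

theorem hasDerivWithinAt_cohesiveEnergy
    (hψ : ∀ x ∈ Ici (0:ℝ), HasDerivWithinAt ψ (ψd x) (Ici 0) x) (hz : 0 ≤ z) (y : ℝ) :
    HasDerivWithinAt (fun y => cohesiveEnergy ψ ψd y z) (cohesiveEnergyDeriv ψd y z)
      (Ici 0) y := by
  rcases hz.eq_or_lt with rfl | hz
  · exact hasDerivWithinAt_cohesiveEnergy_Ici hψ le_rfl y
  have h := (hasDerivWithinAt_cohesiveEnergy_Iic hz.ne' y).union
    (hasDerivWithinAt_cohesiveEnergy_Ici hψ hz.le y)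
  rw [Iic_union_Ici, hasDerivWithinAt_univ] at h
  exact h.hasDerivWithinAt

theorem cohesiveEnergyDeriv_eq_mul_div_max (h : max y z ≠ 0) :
    cohesiveEnergyDeriv ψd y z = ψd (max y z) * (y / max y z) := by
  rcases lt_or_ge y z with hyz | hyz
  · rw [max_eq_right hyz.le, cohesiveEnergyDeriv, if_pos hyz, mul_div_assoc]
  · rw [max_eq_left hyz] at h ⊢
    rw [cohesiveEnergyDeriv_of_ge hyz, div_self h, mul_one]

theorem continuousOn_uncurry_cohesiveEnergyDeriv (hψd : ContinuousOn ψd (Ici 0)) :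
    ContinuousOn (Function.uncurry (cohesiveEnergyDeriv ψd))
      ((Ici (0:ℝ) ×ˢ Ici (0:ℝ)) \ {((0:ℝ), (0:ℝ))}) := by
  have hmax : ∀ p ∈ (Ici (0:ℝ) ×ˢ Ici (0:ℝ)) \ {((0:ℝ), (0:ℝ))}, 0 < max p.1 p.2 := by
    rintro ⟨y, z⟩ ⟨⟨hy, hz⟩, hne⟩
    simp only [mem_singleton_iff, Prod.mk.injEq] at hne
    by_contra! h
    exact hne ⟨le_antisymm ((le_max_left _ _).trans h) hy,
      le_antisymm ((le_max_right _ _).trans h) hz⟩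
  have hcont_max : Continuous fun p : ℝ × ℝ => max p.1 p.2 := continuous_fst.max continuous_snd
  refine ContinuousOn.congr ?_ fun p hp => cohesiveEnergyDeriv_eq_mul_div_max (hmax p hp).ne'
  exact (hψd.comp hcont_max.continuousOn fun p hp => (hmax p hp).le).mul
    (continuousOn_fst.div hcont_max.continuousOn fun p hp => (hmax p hp).ne')

theorem continuousOn_cohesiveEnergyDeriv (hψd : ContinuousOn ψd (Ici 0)) (hz : 0 ≤ z) :
    ContinuousOn (fun y => cohesiveEnergyDeriv ψd y z) (Ici 0) := by
  rcases hz.eq_or_lt with rfl | hz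
  · exact hψd.congr fun y hy => cohesiveEnergyDeriv_of_ge hy
  refine (continuousOn_uncurry_cohesiveEnergyDeriv hψd).comp
    (Continuous.prodMk_left z).continuousOn fun y hy => ⟨⟨hy, hz.le⟩, fun h => ?_⟩
  exact hz.ne' (Prod.mk.inj h).2

theorem cohesiveEnergyDeriv_nonneg (hψd : ∀ x ∈ Ici (0:ℝ), 0 ≤ ψd x) (hy : 0 ≤ y)
    (hz : 0 ≤ z) : 0 ≤ cohesiveEnergyDeriv ψd y z := by
  unfold cohesiveEnergyDeriv
  split_ifs
  · exact div_nonneg (mul_nonneg (hψd z hz) hy) hz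
  · exact hψd y hy

theorem cohesiveEnergyDeriv_le (hψd : ∀ x ∈ Ici (0:ℝ), 0 ≤ ψd x)
    (hanti : AntitoneOn ψd (Ici 0)) (hy : 0 ≤ y) (hz : 0 ≤ z) :
    cohesiveEnergyDeriv ψd y z ≤ ψd z := by
  rcases lt_or_ge y z with h | h
  · rw [cohesiveEnergyDeriv, if_pos h, div_le_iff₀ (hy.trans_lt h)]
    exact mul_le_mul_of_nonneg_left h.le (hψd z hz)
  · rw [cohesiveEnergyDeriv_of_ge h]
    exact hanti hz hy h

end

theorem stmt_1_general (ψ ψd ψdd : ℝ → ℝ)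
    (hmono : StrictMonoOn ψ (Ici (0:ℝ)))
    (hconc : ConcaveOn ℝ (Ici (0:ℝ)) ψ)
    (hd1 : ∀ z ∈ Ici (0:ℝ), HasDerivWithinAt ψ (ψd z) (Ici (0:ℝ)) z)
    (hd2 : ∀ z ∈ Ici (0:ℝ), HasDerivWithinAt ψd (ψdd z) (Ici (0:ℝ)) z)
    (Φ : ℝ → ℝ → ℝ)
    (hΦ : ∀ y ∈ Ici (0:ℝ), ∀ z ∈ Ici (0:ℝ),
      Φ y z = if y < z then ψd z / (2*z) * y^2 + ψ z - z * ψd z / 2 else ψ y) :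
    ∃ Φy : ℝ → ℝ → ℝ,
      (∀ z ∈ Ici (0:ℝ), MonotoneOn (fun y => Φ y z) (Ici (0:ℝ))) ∧
      (∀ z ∈ Ici (0:ℝ), ∃ K : NNReal, LipschitzOnWith K (fun y => Φ y z) (Ici (0:ℝ))) ∧
      (∀ z ∈ Ici (0:ℝ), ∀ y ∈ Ici (0:ℝ),
        HasDerivWithinAt (fun y' => Φ y' z) (Φy y z) (Ici (0:ℝ)) y) ∧
      (∀ z ∈ Ici (0:ℝ), ContinuousOn (fun y => Φy y z) (Ici (0:ℝ))) ∧
      (∀ y ∈ Ici (0:ℝ), ∀ z ∈ Ici (0:ℝ),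
        0 ≤ Φy y z ∧ Φy y z ≤ Φy z z ∧ Φy z z = ψd z ∧ ψd z ≤ ψd 0) ∧
      (∀ z : ℝ, 0 < z → Φy 0 z = 0) ∧
      ContinuousOn (Function.uncurry Φy) ((Ici (0:ℝ) ×ˢ Ici (0:ℝ)) \ {((0:ℝ), (0:ℝ))}) := by
  have hψd_cont : ContinuousOn ψd (Ici 0) := fun x hx => (hd2 x hx).continuousWithinAt
  have hψd_anti : AntitoneOn ψd (Ici 0) := hconc.antitoneOn_of_hasDerivWithinAt hd1
  have hψd_nonneg : ∀ x ∈ Ici (0:ℝ), 0 ≤ ψd x := fun x hx =>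
    hmono.monotoneOn.nonneg_of_hasDerivWithinAt_Ici (hd1 x hx) hx
  have hΦ_deriv : ∀ z ∈ Ici (0:ℝ), ∀ y ∈ Ici (0:ℝ),
      HasDerivWithinAt (fun y' => Φ y' z) (cohesiveEnergyDeriv ψd y z) (Ici 0) y :=
    fun z hz y hy => (hasDerivWithinAt_cohesiveEnergy hd1 hz y).congr_of_mem
      (fun y' hy' => hΦ y' hy' z hz) hy
  have hle_ψd0 : ∀ z ∈ Ici (0:ℝ), ψd z ≤ ψd 0 := fun z hz => hψd_anti self_mem_Ici hz hz
  refine ⟨cohesiveEnergyDeriv ψd, fun z hz => ?_, fun z hz => ?_, hΦ_deriv,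
    fun z hz => continuousOn_cohesiveEnergyDeriv hψd_cont hz, fun y hy z hz => ?_,
    fun _ => cohesiveEnergyDeriv_zero_left, continuousOn_uncurry_cohesiveEnergyDeriv hψd_cont⟩
  · exact (convex_Ici 0).monotoneOn_of_hasDerivWithinAt_nonneg (hΦ_deriv z hz)
      fun y hy => cohesiveEnergyDeriv_nonneg hψd_nonneg hy hz
  · refine ⟨(ψd 0).toNNReal, (convex_Ici 0).lipschitzOnWith_of_nnnorm_hasDerivWithin_le
      (hΦ_deriv z hz) fun y hy => ?_⟩
    rw [← Real.toNNReal_eq_nnnorm_of_nonneg (cohesiveEnergyDeriv_nonneg hψd_nonneg hy hz)]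
    exact Real.toNNReal_le_toNNReal
      ((cohesiveEnergyDeriv_le hψd_nonneg hψd_anti hy hz).trans (hle_ψd0 z hz))
  · rw [cohesiveEnergyDeriv_self]
    exact ⟨cohesiveEnergyDeriv_nonneg hψd_nonneg hy hz,
      cohesiveEnergyDeriv_le hψd_nonneg hψd_anti hy hz, rfl, hle_ψd0 z hz⟩

/-- properties of `y ↦ Φ(y,z)` and of the partial derivative `∂_yΦ`. -/
theorem stmt_1 (ψ ψd ψdd : ℝ → ℝ) (lam : ℝ) (hlam : 0 < lam)
    (hψmap : ∀ z ∈ Ici (0:ℝ), 0 ≤ ψ z)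
    (hmono : StrictMonoOn ψ (Ici (0:ℝ)))
    (hbdd : BddAbove (ψ '' Ici (0:ℝ)))
    (hconc : ConcaveOn ℝ (Ici (0:ℝ)) ψ)
    (hd1 : ∀ z ∈ Ici (0:ℝ), HasDerivWithinAt ψ (ψd z) (Ici (0:ℝ)) z)
    (hd2 : ∀ z ∈ Ici (0:ℝ), HasDerivWithinAt ψd (ψdd z) (Ici (0:ℝ)) z)
    (hd2cont : ContinuousOn ψdd (Ici (0:ℝ)))
    (hψ0 : ψ 0 = 0) (hψd0 : 0 < ψd 0)
    (hlow : ∀ z ∈ Ici (0:ℝ), -lam ≤ ψdd z)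
    (Φ : ℝ → ℝ → ℝ)
    (hΦ : ∀ y ∈ Ici (0:ℝ), ∀ z ∈ Ici (0:ℝ),
      Φ y z = if y < z then ψd z / (2*z) * y^2 + ψ z - z * ψd z / 2 else ψ y) :
    ∃ Φy : ℝ → ℝ → ℝ,
      (∀ z ∈ Ici (0:ℝ), MonotoneOn (fun y => Φ y z) (Ici (0:ℝ))) ∧
      (∀ z ∈ Ici (0:ℝ), ∃ K : NNReal, LipschitzOnWith K (fun y => Φ y z) (Ici (0:ℝ))) ∧
      (∀ z ∈ Ici (0:ℝ), ∀ y ∈ Ici (0:ℝ),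
        HasDerivWithinAt (fun y' => Φ y' z) (Φy y z) (Ici (0:ℝ)) y) ∧
      (∀ z ∈ Ici (0:ℝ), ContinuousOn (fun y => Φy y z) (Ici (0:ℝ))) ∧
      (∀ y ∈ Ici (0:ℝ), ∀ z ∈ Ici (0:ℝ),
        0 ≤ Φy y z ∧ Φy y z ≤ Φy z z ∧ Φy z z = ψd z ∧ ψd z ≤ ψd 0) ∧
      (∀ z : ℝ, 0 < z → Φy 0 z = 0) ∧
      ContinuousOn (Function.uncurry Φy) ((Ici (0:ℝ) ×ˢ Ici (0:ℝ)) \ {((0:ℝ), (0:ℝ))}) :=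
  stmt_1_general ψ ψd ψdd hmono hconc hd1 hd2 Φ hΦ
end

section
/- The regularized densities Φ_ε converge to Φ uniformly on [0,∞)² as ε → 0⁺, i.e. sup_{(y,z) ∈ [0,∞)²} |Φ_ε(y,z) − Φ(y,z)| → 0 as ε → 0⁺. -/
set_option autoImplicit false

open Set Filter Topology

/-!
Put `M = ψ'(0)` and `t = z_ε`. Concavity and monotonicity give `0 ≤ ψ' ≤ M` and
`0 ≤ ψ(z) ≤ M z`, so `t = ε ψ'(t) ≤ ε M`. Then `|ψ_ε - ψ| ≤ M t` on `[0,∞)`, while `ψ_ε' = ψ'`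
on `[t,∞)` and `|ψ_ε' - ψ'| ≤ M` on `[0,t]`. Below the diagonal `Φ_ε - Φ` is
`(ψ_ε'(z) - ψ'(z)) (y² - z²) / (2z) + (ψ_ε(z) - ψ(z))`, whose first term vanishes unless
`z ≤ t`, where `|y² - z²| / (2z) ≤ t / 2`. Hence `|Φ_ε - Φ| ≤ 3 M t / 2 ≤ 3 M² ε / 2`.
-/

lemma tendstoUniformlyOn_of_dist_le {ι α β : Type*} [PseudoMetricSpace β] {F : ι → α → β}
    {f : α → β} {l : Filter ι} {s : Set α} {b : ι → ℝ} (hb : Tendsto b l (𝓝 0))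
    (hFf : ∀ᶠ i in l, ∀ x ∈ s, dist (f x) (F i x) ≤ b i) :
    TendstoUniformlyOn F f l s := by
  rw [Metric.tendstoUniformlyOn_iff]
  intro η hη
  filter_upwards [hFf, hb.eventually (gt_mem_nhds hη)] with i hi hbi x hx
  exact (hi x hx).trans_lt hbi

lemma HasDerivWithinAt.eq_of_eqOn {f g : ℝ → ℝ} {s u : Set ℝ} {x d e : ℝ}
    (hs : UniqueDiffWithinAt ℝ s x) (hsu : s ⊆ u) (hfg : EqOn f g s) (hx : x ∈ s)
    (hf : HasDerivWithinAt f d u x) (hg : HasDerivWithinAt g e s x) : d = e :=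
  hs.eq_deriv s (hf.mono hsu) (hg.congr (fun _ hy => hfg hy) (hfg hx))

namespace ConcaveOn

variable {S : Set ℝ} {f f' : ℝ → ℝ}

lemma antitoneOn_of_hasDerivWithinAt_s16 (hfc : ConcaveOn ℝ S f)
    (hf : ∀ x ∈ S, HasDerivWithinAt f (f' x) S x) : AntitoneOn f' S := by
  intro x hx y hy hxy
  rcases eq_or_lt_of_le hxy with rfl | hxy
  · rfl
  exact (hfc.le_slope_of_hasDerivWithinAt hx hy hxy (hf y hy)).trans
    (hfc.slope_le_of_hasDerivWithinAt hx hy hxy (hf x hx))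

lemma le_add_mul_sub_of_hasDerivWithinAt (hfc : ConcaveOn ℝ S f) {x y d : ℝ} (hx : x ∈ S)
    (hy : y ∈ S) (hxy : x ≤ y) (hf : HasDerivWithinAt f d S x) : f y ≤ f x + d * (y - x) := by
  rcases eq_or_lt_of_le hxy with rfl | hxy
  · simp
  have hslope := hfc.slope_le_of_hasDerivWithinAt hx hy hxy hf
  rw [slope_def_field, div_le_iff₀ (sub_pos.mpr hxy)] at hslope
  linarith

end ConcaveOn

noncomputable def cohesiveDensity (f f' : ℝ → ℝ) (y z : ℝ) : ℝ :=
  if y < z then f' z / (2 * z) * y ^ 2 + f z - z * f' z / 2 else f y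

lemma abs_cohesiveDensity_sub_le {f f' g g' : ℝ → ℝ} {δ η y z : ℝ} (hy : 0 ≤ y) (hz : 0 ≤ z)
    (hδ : ∀ w ∈ Ici (0 : ℝ), |f w - g w| ≤ δ) (hη : z * |f' z - g' z| ≤ η) :
    |cohesiveDensity f f' y z - cohesiveDensity g g' y z| ≤ η / 2 + δ := by
  unfold cohesiveDensity
  split_ifs with hyz
  · replace hz : 0 < z := hy.trans_lt hyz
    have hquot : |(y ^ 2 - z ^ 2) / (2 * z)| ≤ z / 2 := by
      rw [abs_div, abs_of_pos (by positivity : 0 < 2 * z), div_le_iff₀ (by positivity),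
        abs_le]
      constructor <;> nlinarith
    have hsplit : f' z / (2 * z) * y ^ 2 + f z - z * f' z / 2
        - (g' z / (2 * z) * y ^ 2 + g z - z * g' z / 2)
        = (f' z - g' z) * ((y ^ 2 - z ^ 2) / (2 * z)) + (f z - g z) := by
      field_simp
      ring
    calc _ = |(f' z - g' z) * ((y ^ 2 - z ^ 2) / (2 * z)) + (f z - g z)| := by rw [hsplit]
      _ ≤ |f' z - g' z| * (z / 2) + δ := by
        grw [abs_add_le, abs_mul, hquot, hδ z hz.le]
      _ ≤ η / 2 + δ := by linarith
  · have : 0 ≤ η := (mul_nonneg hz (abs_nonneg _)).trans hη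
    linarith [hδ y hy]

noncomputable def regularizedPotential (ψ : ℝ → ℝ) (ε t z : ℝ) : ℝ :=
  if z ≤ t then z ^ 2 / (2 * ε) else ψ z - ψ t + t ^ 2 / (2 * ε)

section Regularization

variable {ψ ψd F : ℝ → ℝ} {ε t M w d : ℝ}

lemma abs_regularizedPotential_sub_le (hε : 0 < ε) (ht : 0 ≤ t) (htM : t ≤ ε * M)
    (hψ_nonneg : ∀ z ∈ Ici (0 : ℝ), 0 ≤ ψ z) (hψ_le : ∀ z ∈ Ici (0 : ℝ), ψ z ≤ M * z)
    (hw : 0 ≤ w) : |regularizedPotential ψ ε t w - ψ w| ≤ M * t := by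
  have hM : 0 ≤ M := nonneg_of_mul_nonneg_right (ht.trans htM) hε
  have hcap : t ^ 2 / (2 * ε) ≤ M * t / 2 := by
    rw [div_le_iff₀ (by positivity)]
    nlinarith
  have hcap_nonneg : 0 ≤ t ^ 2 / (2 * ε) := by positivity
  unfold regularizedPotential
  split_ifs with hwt
  · have hw2 : w ^ 2 / (2 * ε) ≤ t ^ 2 / (2 * ε) := by gcongr
    have hψw : ψ w ≤ M * t := (hψ_le w hw).trans (by gcongr)
    rw [abs_le]
    constructor <;> nlinarith [hψ_nonneg w hw, (by positivity : 0 ≤ w ^ 2 / (2 * ε))]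
  · have hψt : ψ t ≤ M * t := hψ_le t ht
    rw [abs_le]
    constructor <;> nlinarith [hψ_nonneg t ht]

lemma HasDerivWithinAt.eq_div_of_eqOn_regularizedPotential (ht : 0 < t)
    (hF : EqOn F (regularizedPotential ψ ε t) (Ici 0)) (hw : w ∈ Icc 0 t)
    (hFd : HasDerivWithinAt F d (Ici 0) w) : d = w / ε := by
  have hquad : HasDerivWithinAt (fun z => z ^ 2 / (2 * ε)) (w / ε) (Icc 0 t) w := by
    refine ((hasDerivAt_pow 2 w).div_const (2 * ε)).hasDerivWithinAt.congr_deriv ?_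
    norm_num
    ring
  refine hFd.eq_of_eqOn (uniqueDiffOn_Icc ht w hw) Icc_subset_Ici_self ?_ hw hquad
  intro z hz
  rw [hF hz.1]
  exact if_pos hz.2

lemma HasDerivWithinAt.eq_of_eqOn_regularizedPotential (ht : 0 ≤ t)
    (hψd : ∀ z ∈ Ici (0 : ℝ), HasDerivWithinAt ψ (ψd z) (Ici 0) z)
    (hF : EqOn F (regularizedPotential ψ ε t) (Ici 0)) (hw : t ≤ w)
    (hFd : HasDerivWithinAt F d (Ici 0) w) : d = ψd w := by
  have hsub : Ici t ⊆ Ici 0 := Ici_subset_Ici.mpr ht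
  have hshift : HasDerivWithinAt (fun z => ψ z - ψ t + t ^ 2 / (2 * ε)) (ψd w) (Ici t) w :=
    (((hψd w (ht.trans hw)).mono hsub).sub_const _).add_const _
  refine hFd.eq_of_eqOn (uniqueDiffOn_Ici t w hw) hsub ?_ hw hshift
  intro z hz
  rw [hF (hsub hz), regularizedPotential]
  split_ifs with hzt
  · simp only [le_antisymm hzt hz, sub_self, zero_add]
  · rfl

lemma HasDerivWithinAt.mul_abs_sub_le_of_eqOn_regularizedPotential (hε : 0 < ε)
    (ht : 0 < t) (htM : t ≤ ε * M) (hψd : ∀ z ∈ Ici (0 : ℝ), HasDerivWithinAt ψ (ψd z) (Ici 0) z)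
    (hψd_nonneg : ∀ z ∈ Ici (0 : ℝ), 0 ≤ ψd z) (hψd_le : ∀ z ∈ Ici (0 : ℝ), ψd z ≤ M)
    (hF : EqOn F (regularizedPotential ψ ε t) (Ici 0)) (hw : 0 ≤ w)
    (hFd : HasDerivWithinAt F d (Ici 0) w) : w * |d - ψd w| ≤ M * t := by
  rcases le_total w t with hwt | htw
  · rw [hFd.eq_div_of_eqOn_regularizedPotential ht hF ⟨hw, hwt⟩]
    have hquot : w / ε ≤ M := by
      rw [div_le_iff₀ hε]
      linarith
    have hdiff : |w / ε - ψd w| ≤ M := by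
      rw [abs_le]
      constructor <;> linarith [hψd_nonneg w hw, hψd_le w hw, div_nonneg hw hε.le]
    calc w * |w / ε - ψd w| ≤ t * M := by gcongr
      _ = M * t := mul_comm t M
  · rw [hFd.eq_of_eqOn_regularizedPotential ht.le hψd hF htw, sub_self, abs_zero, mul_zero]
    exact mul_nonneg (nonneg_of_mul_nonneg_right (ht.le.trans htM) hε) ht.le

end Regularization

theorem stmt_16_general (ψ ψd : ℝ → ℝ)
    (hψmap : ∀ z ∈ Ici (0:ℝ), 0 ≤ ψ z)
    (hmono : StrictMonoOn ψ (Ici (0:ℝ)))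
    (hconc : ConcaveOn ℝ (Ici (0:ℝ)) ψ)
    (hd1 : ∀ z ∈ Ici (0:ℝ), HasDerivWithinAt ψ (ψd z) (Ici (0:ℝ)) z)
    (hψ0 : ψ 0 = 0)
    (Φ : ℝ → ℝ → ℝ)
    (hΦ : ∀ y ∈ Ici (0:ℝ), ∀ z ∈ Ici (0:ℝ),
      Φ y z = if y < z then ψd z / (2*z) * y^2 + ψ z - z * ψd z / 2 else ψ y)
    (zfun : ℝ → ℝ)
    (hz : ∀ ε > (0:ℝ), 0 < zfun ε ∧ ε * ψd (zfun ε) = zfun ε ∧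
      ∀ z : ℝ, 0 ≤ z → ε * ψd z = z → z = zfun ε)
    (Ψ Ψd : ℝ → ℝ → ℝ)
    (hΨ : ∀ ε > (0:ℝ), ∀ z ∈ Ici (0:ℝ),
      Ψ ε z = if z ≤ zfun ε then z^2 / (2*ε)
        else ψ z - ψ (zfun ε) + (zfun ε)^2 / (2*ε))
    (hΨd : ∀ ε > (0:ℝ), ∀ z ∈ Ici (0:ℝ), HasDerivWithinAt (Ψ ε) (Ψd ε z) (Ici (0:ℝ)) z)
    (Φε : ℝ → ℝ → ℝ → ℝ)
    (hΦε : ∀ ε > (0:ℝ), ∀ y ∈ Ici (0:ℝ), ∀ z ∈ Ici (0:ℝ),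
      Φε ε y z = if y < z then Ψd ε z / (2*z) * y^2 + Ψ ε z - z * Ψd ε z / 2
        else Ψ ε y) :
    TendstoUniformlyOn (fun ε p => Φε ε p.1 p.2) (fun p : ℝ × ℝ => Φ p.1 p.2)
      (𝓝[>] 0) (Ici (0:ℝ) ×ˢ Ici (0:ℝ)) := by
  set M := ψd 0
  have hψd_nonneg (z : ℝ) (hz : z ∈ Ici (0 : ℝ)) : 0 ≤ ψd z :=
    (hd1 z hz).nonneg_of_monotoneOn
      (uniqueDiffWithinAt_iff_accPt.mp (uniqueDiffOn_Ici 0 z hz)) hmono.monotoneOn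
  have hψd_le (z : ℝ) (hz : z ∈ Ici (0 : ℝ)) : ψd z ≤ M :=
    hconc.antitoneOn_of_hasDerivWithinAt_s16 hd1 self_mem_Ici hz hz
  have hψ_le (z : ℝ) (hz : z ∈ Ici (0 : ℝ)) : ψ z ≤ M * z := by
    simpa [hψ0] using
      hconc.le_add_mul_sub_of_hasDerivWithinAt self_mem_Ici hz hz (hd1 0 self_mem_Ici)
  refine tendstoUniformlyOn_of_dist_le (b := fun ε => 3 / 2 * M ^ 2 * ε) ?_ ?_
  · have hlin : Tendsto (fun ε : ℝ => 3 / 2 * M ^ 2 * ε) (𝓝 0) (𝓝 (3 / 2 * M ^ 2 * 0)) :=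
      tendsto_const_nhds.mul tendsto_id
    simpa using hlin.mono_left nhdsWithin_le_nhds
  filter_upwards [self_mem_nhdsWithin] with ε (hε : 0 < ε)
  rintro ⟨y, z⟩ ⟨hy : y ∈ Ici 0, hzm : z ∈ Ici 0⟩
  obtain ⟨ht, hfix, -⟩ := hz ε hε
  have htM : zfun ε ≤ ε * M := hfix ▸ mul_le_mul_of_nonneg_left (hψd_le _ ht.le) hε.le
  have hΨeq : EqOn (Ψ ε) (regularizedPotential ψ ε (zfun ε)) (Ici 0) := hΨ ε hε
  have hbound := abs_cohesiveDensity_sub_le (f := Ψ ε) (g := ψ) hy hzm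
    (fun w hw => by
      rw [hΨeq hw]
      exact abs_regularizedPotential_sub_le hε ht.le htM hψmap hψ_le hw)
    ((hΨd ε hε z hzm).mul_abs_sub_le_of_eqOn_regularizedPotential hε ht htM hd1 hψd_nonneg
      hψd_le hΨeq hzm)
  rw [dist_comm, Real.dist_eq, hΦε ε hε y hy z hzm, hΦ y hy z hzm]
  refine hbound.trans ?_
  nlinarith [hψd_nonneg 0 self_mem_Ici]

/-- the regularized densities `Φ_ε` converge to `Φ` uniformly on
`[0,∞)²` as `ε → 0⁺`. -/
theorem stmt_16 (ψ ψd ψdd : ℝ → ℝ) (lam : ℝ) (hlam : 0 < lam)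
    (hψmap : ∀ z ∈ Ici (0:ℝ), 0 ≤ ψ z)
    (hmono : StrictMonoOn ψ (Ici (0:ℝ)))
    (hbdd : BddAbove (ψ '' Ici (0:ℝ)))
    (hconc : ConcaveOn ℝ (Ici (0:ℝ)) ψ)
    (hd1 : ∀ z ∈ Ici (0:ℝ), HasDerivWithinAt ψ (ψd z) (Ici (0:ℝ)) z)
    (hd2 : ∀ z ∈ Ici (0:ℝ), HasDerivWithinAt ψd (ψdd z) (Ici (0:ℝ)) z)
    (hd2cont : ContinuousOn ψdd (Ici (0:ℝ)))
    (hψ0 : ψ 0 = 0) (hψd0 : 0 < ψd 0)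
    (hlow : ∀ z ∈ Ici (0:ℝ), -lam ≤ ψdd z)
    (Φ : ℝ → ℝ → ℝ)
    (hΦ : ∀ y ∈ Ici (0:ℝ), ∀ z ∈ Ici (0:ℝ),
      Φ y z = if y < z then ψd z / (2*z) * y^2 + ψ z - z * ψd z / 2 else ψ y)
    (zfun : ℝ → ℝ)
    (hz : ∀ ε > (0:ℝ), 0 < zfun ε ∧ ε * ψd (zfun ε) = zfun ε ∧
      ∀ z : ℝ, 0 ≤ z → ε * ψd z = z → z = zfun ε)
    (Ψ Ψd : ℝ → ℝ → ℝ)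
    (hΨ : ∀ ε > (0:ℝ), ∀ z ∈ Ici (0:ℝ),
      Ψ ε z = if z ≤ zfun ε then z^2 / (2*ε)
        else ψ z - ψ (zfun ε) + (zfun ε)^2 / (2*ε))
    (hΨd : ∀ ε > (0:ℝ), ∀ z ∈ Ici (0:ℝ), HasDerivWithinAt (Ψ ε) (Ψd ε z) (Ici (0:ℝ)) z)
    (Φε : ℝ → ℝ → ℝ → ℝ)
    (hΦε : ∀ ε > (0:ℝ), ∀ y ∈ Ici (0:ℝ), ∀ z ∈ Ici (0:ℝ),
      Φε ε y z = if y < z then Ψd ε z / (2*z) * y^2 + Ψ ε z - z * Ψd ε z / 2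
        else Ψ ε y) :
    TendstoUniformlyOn (fun ε p => Φε ε p.1 p.2) (fun p : ℝ × ℝ => Φ p.1 p.2)
      (𝓝[>] 0) (Ici (0:ℝ) ×ˢ Ici (0:ℝ)) :=
  stmt_16_general ψ ψd hψmap hmono hconc hd1 hψ0 Φ hΦ zfun hz Ψ Ψd hΨ hΨd Φε hΦε
end
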